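/- arXiv:2501.09285 — 4 statements merged into one kernel-verified Lean document; each statement's English description precedes it below -/
import Mathlib

section
/- In any Ł_n-model M, the axiom [π₀ ∪ π₁]φ ↔ [π₀]φ ∧ [π₁]φ is valid: for every state s, 𝓘_M([π₀ ∪ π₁]φ, s) = 𝓘_M([π₀]φ, s) ∧ 𝓘_M([π₁]φ, s). -/
/-- The finite Łukasiewicz chain Ł_n as a subset of ℚ. -/
def Luk (n : ℕ) : Set ℚ := {x | ∃ k : ℕ, k ≤ n - 1 ∧ x = (k : ℚ) / ((n : ℚ) - 1)}

/-- Łukasiewicz t-norm. -/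
def lodot (a b : ℚ) : ℚ := max 0 (a + b - 1)

/-- Łukasiewicz implication. -/
def limp (a b : ℚ) : ℚ := min 1 (1 - a + b)

variable {S : Type} [Fintype S] [DecidableEq S]

/-- Join of a finitely-indexed family (empty join is 0, the bottom of Ł_n). -/
def qSup {α : Type} (A : Finset α) (g : α → ℚ) : ℚ := A.fold max 0 g

/-- Meet of a finitely-indexed family (empty meet is 1, the top of Ł_n). -/
def qInf {α : Type} (A : Finset α) (g : α → ℚ) : ℚ := A.fold min 1 g

/-- Iterated Łukasiewicz t-norm over a finite index set (empty product is 1). -/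
noncomputable def bigOdot (U : Finset S) (g : S → ℚ) : ℚ :=
  U.toList.foldr (fun u acc => lodot (g u) acc) 1

/-- A reachable Ł_n-relation: all values lie in the chain Ł_n. -/
def Reachable (n : ℕ) (R : S → Finset S → ℚ) : Prop := ∀ s T, R s T ∈ Luk n

/-- Composition of reachable relations. -/
noncomputable def comp (R Q : S → Finset S → ℚ) (s : S) (T : Finset S) : ℚ :=
  qSup Finset.univ (fun U : Finset S =>
    qSup ((Finset.univ : Finset (S → Finset S)).filter (fun f => U.biUnion f = T))
      (fun f => lodot (R s U) (bigOdot U (fun u => Q u (f u)))))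

/-- Union of reachable relations. -/
def runion (R R' : S → Finset S → ℚ) (s : S) (T : Finset S) : ℚ := max (R s T) (R' s T)

/-- The identity reachable relation ι. -/
def iota (s : S) (T : Finset S) : ℚ := if T = {s} then 1 else 0

/-- Finite iterations: R^(0) = ι, R^(m+1) = ι ∪ (R ∘ R^(m)). -/
noncomputable def rpow (R : S → Finset S → ℚ) : ℕ → (S → Finset S → ℚ)
  | 0 => iota
  | m + 1 => runion iota (comp R (rpow R m))

/-- Interpretation of box: ⋀_{T⊆S} (R(s,T) → ⋀_{t∈T} v(t)). -/
def box (R : S → Finset S → ℚ) (v : S → ℚ) (s : S) : ℚ :=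
  qInf Finset.univ (fun T : Finset S => limp (R s T) (qInf T v))

/-- Interpretation of diamond: ⋁_{T⊆S} (R(s,T) ⊙ ⋀_{t∈T} v(t)). -/
def dia (R : S → Finset S → ℚ) (v : S → ℚ) (s : S) : ℚ :=
  qSup Finset.univ (fun T : Finset S => lodot (R s T) (qInf T v))

/-- Test relation: value of φ at s if T = {s}, else 0. -/
def tst (a : S → ℚ) (s : S) (T : Finset S) : ℚ := if T = {s} then a s else 0

lemma limp_max (a b c : ℚ) : limp (max a b) c = min (limp a c) (limp b c) := by
  unfold limp
  rw [min_min_min_comm, min_self]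
  congr 1
  rcases le_total a b with h | h
  · rw [max_eq_right h, min_eq_right (by linarith)]
  · rw [max_eq_left h, min_eq_left (by linarith)]

lemma qInf_min {α : Type} (A : Finset α) (f g : α → ℚ) :
    qInf A (fun x => min (f x) (g x)) = min (qInf A f) (qInf A g) := by
  classical
  induction A using Finset.induction_on with
  | empty => simp [qInf]
  | insert _ _ h ih =>
      simp only [qInf, Finset.fold_insert h] at *
      rw [ih]
      exact min_min_min_comm _ _ _ _

theorem box_union_axiom (n : ℕ) (hn : 2 ≤ n) {S : Type} [Fintype S] [DecidableEq S]
    (R0 R1 : S → Finset S → ℚ) (hR0 : Reachable n R0) (hR1 : Reachable n R1)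
    (v : S → ℚ) (hv : ∀ t, v t ∈ Luk n) :
    ∀ s, box (runion R0 R1) v s = min (box R0 v s) (box R1 v s) := by
  intro s
  unfold box runion
  rw [← qInf_min]
  congr 1
  funext T
  exact limp_max _ _ _
end

section
/- In any Ł_n-model M, the axiom ⟨π₀ ∪ π₁⟩φ ↔ ⟨π₀⟩φ ∨ ⟨π₁⟩φ is valid: for every state s, 𝓘_M(⟨π₀ ∪ π₁⟩φ, s) = 𝓘_M(⟨π₀⟩φ, s) ∨ 𝓘_M(⟨π₁⟩φ, s). -/
variable {S : Type} [Fintype S] [DecidableEq S]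

lemma lodot_max_left (a b c : ℚ) : lodot (max a b) c = max (lodot a c) (lodot b c) := by
  unfold lodot
  rcases le_total a b with h | h
  · rw [max_eq_right h,
      max_eq_right (max_le_max le_rfl (by linarith : a + c - 1 ≤ b + c - 1))]
  · rw [max_eq_left h,
      max_eq_left (max_le_max le_rfl (by linarith : b + c - 1 ≤ a + c - 1))]

lemma qSup_max {α : Type} (A : Finset α) (f g : α → ℚ) :
    qSup A (fun x => max (f x) (g x)) = max (qSup A f) (qSup A g) := by
  classical
  induction A using Finset.induction_on with
  | empty => simp [qSup]
  | insert _ _ h ih =>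
      unfold qSup at *
      rw [Finset.fold_insert h, Finset.fold_insert h, Finset.fold_insert h, ih]
      rw [max_max_max_comm]

theorem dia_union_axiom (n : ℕ) (hn : 2 ≤ n) {S : Type} [Fintype S] [DecidableEq S]
    (R0 R1 : S → Finset S → ℚ) (hR0 : Reachable n R0) (hR1 : Reachable n R1)
    (v : S → ℚ) (hv : ∀ t, v t ∈ Luk n) :
    ∀ s, dia (runion R0 R1) v s = max (dia R0 v s) (dia R1 v s) := by
  intro s
  unfold dia runion
  rw [← qSup_max]
  congr 1
  ext T
  exact lodot_max_left _ _ _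
end

section
/- In any Ł_n-model M, the constant-shift axiom for box is valid: for every state s and every c ∈ Ł_n, 𝓘_M([π](c̄ → φ), s) = c → 𝓘_M([π]φ, s). -/
variable {S : Type} [Fintype S] [DecidableEq S]

lemma Luk_le_one {n : ℕ} (hn : 2 ≤ n) {x : ℚ} (hx : x ∈ Luk n) : x ≤ 1 := by
  obtain ⟨k, hk, rfl⟩ := hx
  have h1 : (1 : ℚ) ≤ (n : ℚ) - 1 := by
    have : (2 : ℚ) ≤ (n : ℚ) := by exact_mod_cast hn
    linarith
  have hk' : (k : ℚ) ≤ (n : ℚ) - 1 := by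
    have : (k : ℚ) ≤ ((n - 1 : ℕ) : ℚ) := by exact_mod_cast hk
    have hcast : ((n - 1 : ℕ) : ℚ) = (n : ℚ) - 1 := by
      have := Nat.cast_sub (by omega : 1 ≤ n) (R := ℚ)
      simpa using this
    linarith [hcast ▸ this]
  rw [div_le_one (by linarith)]
  exact hk'

lemma limp_min (c a b : ℚ) : limp c (min a b) = min (limp c a) (limp c b) := by
  unfold limp
  rcases le_total a b with h | h
  · rw [min_eq_left h, min_eq_left (min_le_min le_rfl (by linarith))]
  · rw [min_eq_right h, min_eq_right (min_le_min le_rfl (by linarith))]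

lemma limp_comm {a c b : ℚ} (ha : a ≤ 1) (hc : c ≤ 1) :
    limp a (limp c b) = limp c (limp a b) := by
  unfold limp
  rcases le_total 1 (1 - c + b) with h | h <;>
  rcases le_total 1 (1 - a + b) with h' | h' <;>
    simp [min_def] <;> split_ifs <;> linarith

lemma limp_qInf {α : Type} {c : ℚ} (hc : c ≤ 1) (A : Finset α) (g : α → ℚ) :
    limp c (qInf A g) = qInf A (fun x => limp c (g x)) := by
  classical
  induction A using Finset.induction with
  | empty =>
      simp only [qInf, Finset.fold_empty, limp]
      rw [min_eq_left (by linarith)]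
  | insert _ _ h ih =>
      simp only [qInf, Finset.fold_insert h] at *
      rw [limp_min, ih]

theorem box_constant_shift (n : ℕ) (hn : 2 ≤ n) {S : Type} [Fintype S] [DecidableEq S]
    (R : S → Finset S → ℚ) (hR : Reachable n R)
    (v : S → ℚ) (hv : ∀ t, v t ∈ Luk n) (c : ℚ) (hc : c ∈ Luk n) :
    ∀ s, box R (fun t => limp c (v t)) s = limp c (box R v s) := by
  intro s
  have hc1 : c ≤ 1 := Luk_le_one hn hc
  unfold box
  rw [limp_qInf hc1]
  apply Finset.fold_congr
  intro T _
  rw [← limp_qInf hc1, limp_comm (Luk_le_one hn (hR s T)) hc1]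
end

section
/- In any Ł_n-model M, the box-star unfolding axiom is valid at value 1: for every state s, 𝓘_M([π*]φ, s) ≤ 𝓘_M(φ ∧ [π][π*]φ, s), where R_{π*} = ⋁_{m≥0} R_π^(m) with R^(0) = ι and R^(m+1) = ι ∪ (R ∘ R^(m)). -/
variable {S : Type} [Fintype S] [DecidableEq S]

/-! Since `R^(0) = ι`, we have `R_{π*}(s,{s}) ≥ 1`, which gives `[π*]φ ≤ φ`. For the other
conjunct, combine an `R`-step `s → T` with a `π*`-step `t → T'` from some `t ∈ T`: the latter is
attained by some `R^(m)`, and letting `t` move to `T'` while the other members of `T` stay put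
(at value `R^(m)(u,{u}) ≥ 1`) is an `R^(m+1)`-step from `s` to a superset of `T'`, of value at
least `R(s,T) ⊙ R^(m)(t,T')`. Residuation of `→` over `⊙` then yields
`[π*]φ(s) ≤ R(s,T) → [π*]φ(t)`. -/

lemma qInf_le {α : Type} {A : Finset α} (g : α → ℚ) {a : α} (ha : a ∈ A) : qInf A g ≤ g a :=
  (Finset.fold_min_le _).2 (Or.inr ⟨a, ha, le_rfl⟩)

lemma qInf_le_one {α : Type} (A : Finset α) (g : α → ℚ) : qInf A g ≤ 1 :=
  (Finset.fold_min_le _).2 (Or.inl le_rfl)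

lemma le_qInf {α : Type} {A : Finset α} {g : α → ℚ} {c : ℚ} (h1 : c ≤ 1)
    (hg : ∀ a ∈ A, c ≤ g a) : c ≤ qInf A g :=
  (Finset.le_fold_min _).2 ⟨h1, hg⟩

lemma qInf_anti {α : Type} {A B : Finset α} (g : α → ℚ) (h : A ⊆ B) : qInf B g ≤ qInf A g :=
  le_qInf (qInf_le_one _ _) fun _ ha => qInf_le g (h ha)

lemma le_qSup {α : Type} {A : Finset α} (g : α → ℚ) {a : α} (ha : a ∈ A) : g a ≤ qSup A g :=
  (Finset.le_fold_max _).2 (Or.inr ⟨a, ha, le_rfl⟩)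

lemma le_one_of_mem_Luk {n : ℕ} {x : ℚ} (hx : x ∈ Luk n) : x ≤ 1 := by
  obtain ⟨k, hk, rfl⟩ := hx
  rcases Nat.eq_zero_or_pos k with rfl | hk0
  · simp
  have hkn : (k : ℚ) ≤ (n : ℚ) - 1 := by
    rw [← Nat.cast_one, ← Nat.cast_sub (by omega)]
    exact_mod_cast hk
  exact div_le_one_of_le₀ hkn (le_trans (Nat.cast_nonneg k) hkn)

lemma add_sub_one_le_lodot (a b : ℚ) : a + b - 1 ≤ lodot a b := le_max_right _ _

lemma lodot_le_lodot_right (a : ℚ) {b c : ℚ} (h : b ≤ c) : lodot a b ≤ lodot a c :=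
  max_le_max le_rfl (by linarith)

lemma le_lodot_of_one_le_left {a : ℚ} (ha : 1 ≤ a) (b : ℚ) : b ≤ lodot a b :=
  le_trans (by linarith) (add_sub_one_le_lodot a b)

lemma le_lodot_of_one_le_right (a : ℚ) {b : ℚ} (hb : 1 ≤ b) : a ≤ lodot a b :=
  le_trans (by linarith) (add_sub_one_le_lodot a b)

lemma le_limp_iff {a b c : ℚ} : c ≤ limp a b ↔ c ≤ 1 ∧ a + c - 1 ≤ b := by
  rw [limp, le_min_iff]
  constructor <;> rintro ⟨h1, h2⟩ <;> exact ⟨h1, by linarith⟩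

lemma one_le_foldr_lodot {α : Type*} (g : α → ℚ) {l : List α} (hl : ∀ u ∈ l, 1 ≤ g u) :
    1 ≤ l.foldr (fun u acc => lodot (g u) acc) 1 := by
  induction l with
  | nil => simp
  | cons x l ih =>
    simp only [List.forall_mem_cons] at hl
    exact (ih hl.2).trans (le_lodot_of_one_le_left hl.1 _)

lemma le_foldr_lodot_of_mem {α : Type*} (g : α → ℚ) {t : α} {l : List α} (ht : t ∈ l)
    (hl : l.Nodup) (hone : ∀ u ∈ l, u ≠ t → 1 ≤ g u) :
    g t ≤ l.foldr (fun u acc => lodot (g u) acc) 1 := by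
  induction l with
  | nil => simp at ht
  | cons x l ih =>
    rw [List.nodup_cons] at hl
    rw [List.foldr_cons]
    by_cases hxt : x = t
    · subst hxt
      refine le_lodot_of_one_le_right _ (one_le_foldr_lodot g fun u hu => ?_)
      exact hone u (List.mem_cons_of_mem _ hu) (ne_of_mem_of_not_mem hu hl.1)
    · have ht' : t ∈ l := (List.mem_cons.1 ht).resolve_left (Ne.symm hxt)
      exact (ih ht' hl.2 fun u hu => hone u (List.mem_cons_of_mem _ hu)).trans
        (le_lodot_of_one_le_left (hone x List.mem_cons_self hxt) _)

lemma le_bigOdot_of_mem {α : Type} (g : α → ℚ) {U : Finset α} {t : α} (ht : t ∈ U)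
    (hone : ∀ u ∈ U, u ≠ t → 1 ≤ g u) : g t ≤ bigOdot U g :=
  le_foldr_lodot_of_mem g (Finset.mem_toList.2 ht) U.nodup_toList
    fun u hu => hone u (Finset.mem_toList.1 hu)

section Box

variable {α : Type} [Fintype α]

lemma add_box_sub_one_le (Q : α → Finset α → ℚ) (v : α → ℚ) (s : α) (T : Finset α) :
    Q s T + box Q v s - 1 ≤ qInf T v :=
  (le_limp_iff.1 (qInf_le (fun T => limp (Q s T) (qInf T v)) (Finset.mem_univ T))).2

lemma box_le_of_one_le {Q : α → Finset α → ℚ} (v : α → ℚ) {s : α} (hs : 1 ≤ Q s {s}) :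
    box Q v s ≤ v s := by
  have := add_box_sub_one_le Q v s {s}
  have := qInf_le v (Finset.mem_singleton_self s)
  linarith

-- `hRQ` is a pointwise form of `R ∘ Q ≤ Q` at `s`.
lemma box_le_box_box {R Q : α → Finset α → ℚ} (v : α → ℚ) {s : α} (hR : ∀ T, R s T ≤ 1)
    (hRQ : ∀ T, ∀ t ∈ T, ∀ T', ∃ W, T' ⊆ W ∧ lodot (R s T) (Q t T') ≤ Q s W) :
    box Q v s ≤ box R (box Q v) s := by
  have hX : box Q v s ≤ 1 := qInf_le_one _ _
  refine le_qInf hX fun T _ => le_limp_iff.2 ⟨hX, le_qInf (by linarith [hR T]) fun t ht => ?_⟩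
  refine le_qInf (by linarith [hR T]) fun T' _ => le_limp_iff.2 ⟨by linarith [hR T], ?_⟩
  obtain ⟨W, hT'W, hW⟩ := hRQ T t ht T'
  have := add_box_sub_one_le Q v s W
  have := add_sub_one_le_lodot (R s T) (Q t T')
  have := qInf_anti v hT'W
  linarith

end Box

section Iterate

variable {α : Type} [Fintype α] [DecidableEq α]

lemma one_le_rpow_self (R : α → Finset α → ℚ) (m : ℕ) (s : α) : 1 ≤ rpow R m s {s} := by
  cases m with
  | zero => simp [rpow, iota]
  | succ m => exact le_trans (by simp [iota]) (le_max_left _ _)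

lemma lodot_bigOdot_le_comp (R Q : α → Finset α → ℚ) (s : α) {U : Finset α}
    (f : α → Finset α) :
    lodot (R s U) (bigOdot U fun u => Q u (f u)) ≤ comp R Q s (U.biUnion f) := by
  unfold comp
  have hf : f ∈ (Finset.univ : Finset (α → Finset α)).filter
      (fun g => U.biUnion g = U.biUnion f) := by
    simp
  have hU := le_qSup (fun U' : Finset α => qSup ((Finset.univ : Finset (α → Finset α)).filter
    (fun g => U'.biUnion g = U.biUnion f)) fun g => lodot (R s U') (bigOdot U' fun u => Q u (g u)))
    (Finset.mem_univ U)
  have hf' := le_qSup (fun g => lodot (R s U) (bigOdot U fun u => Q u (g u))) hf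
  exact hf'.trans hU

lemma comp_le_rpow_succ (R : α → Finset α → ℚ) (m : ℕ) (s : α) (T : Finset α) :
    comp R (rpow R m) s T ≤ rpow R (m + 1) s T :=
  le_max_right _ _

lemma lodot_le_rpow_succ (R : α → Finset α → ℚ) (m : ℕ) (s : α) {T : Finset α} {t : α}
    (ht : t ∈ T) (T' : Finset α) :
    lodot (R s T) (rpow R m t T') ≤
      rpow R (m + 1) s (T.biUnion (Function.update (fun u => {u}) t T')) := by
  refine le_trans (lodot_le_lodot_right _ ?_)
    ((lodot_bigOdot_le_comp R (rpow R m) s _).trans (comp_le_rpow_succ R m s _))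
  conv_lhs => rw [← Function.update_self t T' (fun u => ({u} : Finset α))]
  refine le_bigOdot_of_mem (fun u => rpow R m u _) ht fun u _ hut => ?_
  simpa only [Function.update_of_ne hut] using one_le_rpow_self R m u

end Iterate

theorem box_star_unfold_general (n : ℕ) {S : Type} [Fintype S] [DecidableEq S]
    (R : S → Finset S → ℚ) (hR : Reachable n R)
    (Rstar : S → Finset S → ℚ)
    (hub : ∀ (m : ℕ) (s : S) (T : Finset S), rpow R m s T ≤ Rstar s T)
    (hattained : ∀ (s : S) (T : Finset S), ∃ m : ℕ, Rstar s T = rpow R m s T)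
    (v : S → ℚ) :
    ∀ s, box Rstar v s ≤ min (v s) (box R (box Rstar v) s) := by
  intro s
  have hstep : ∀ T, ∀ t ∈ T, ∀ T', ∃ W, T' ⊆ W ∧ lodot (R s T) (Rstar t T') ≤ Rstar s W := by
    intro T t ht T'
    obtain ⟨m, hm⟩ := hattained t T'
    refine ⟨_, ?_, hm ▸ (lodot_le_rpow_succ R m s ht T').trans (hub (m + 1) s _)⟩
    simpa only [Function.update_self] using
      Finset.subset_biUnion_of_mem (Function.update (fun u => {u}) t T') ht
  exact le_min (box_le_of_one_le v ((one_le_rpow_self R 0 s).trans (hub 0 s {s})))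
    (box_le_box_box v (fun T => le_one_of_mem_Luk (hR s T)) hstep)

theorem box_star_unfold (n : ℕ) (hn : 2 ≤ n) {S : Type} [Fintype S] [DecidableEq S]
    (R : S → Finset S → ℚ) (hR : Reachable n R)
    (Rstar : S → Finset S → ℚ)
    (hub : ∀ (m : ℕ) (s : S) (T : Finset S), rpow R m s T ≤ Rstar s T)
    (hattained : ∀ (s : S) (T : Finset S), ∃ m : ℕ, Rstar s T = rpow R m s T)
    (v : S → ℚ) (hv : ∀ t, v t ∈ Luk n) :
    ∀ s, box Rstar v s ≤ min (v s) (box R (box Rstar v) s) :=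
  box_star_unfold_general n R hR Rstar hub hattained v
end
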